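/- Let X be a Banach lattice with property (P) and let 𝒜 be an algebra of subsets of a set Ω. Then the space ba₀(𝒜, X) of finitely additive set functions F : 𝒜 → X with finite norm ‖F‖ = sup over finite 𝒜-partitions π of Ω of ‖Σ_{A∈π} |F(A)|‖_X, ordered setwise, is a Banach lattice possessing property (P). -/

import Mathlib

/-!
Everything is computed setwise. Testing the norm on the partition `{A, Aᶜ}` gives
`‖F A‖ ≤ ‖F‖`, so Cauchy sequences and norm bounded increasing nets in `ba₀` converge setwise, by
completeness, resp. property (P), of `X`. Setwise limits are finitely additive, and since
variation sums are finite sums, bounds on them pass to the limit. For an increasing net with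
setwise supremum `G`, each `G - F a` is positive, so its norm is `‖(G - F a) Ω‖`, which tends
to `0`.

For the supremum of `F` and `G` put `D = F - G`. The variation sums `Σ_{E ∈ π} |D E|`, directed
by common refinement, form a norm bounded increasing net, so by (P) they have a common upper bound
in `X`: `D` is order bounded. Property (P) also makes `X` Dedekind complete, so
`P A = sup {D B | B ∈ C, B ⊆ A}` exists; `P` is finitely additive and positive, and
`F ⊔ G = G + P`.
-/

noncomputable section
open Filter Set

variable {Ω : Type}

/-- `C` is an algebra of subsets of `Ω`. -/
def IsSetAlg (C : Set (Set Ω)) : Prop :=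
  ∅ ∈ C ∧ (∀ A ∈ C, Aᶜ ∈ C) ∧ ∀ A ∈ C, ∀ B ∈ C, A ∪ B ∈ C

/-- `π` is a partition of `A` into finitely many members of `C`. -/
def IsPartition (C : Set (Set Ω)) (π : Finset (Set Ω)) (A : Set Ω) : Prop :=
  (∀ E ∈ π, E ∈ C) ∧ (π : Set (Set Ω)).PairwiseDisjoint id ∧
    ⋃₀ (π : Set (Set Ω)) = A

variable {X : Type} [NormedAddCommGroup X] [Lattice X] [HasSolidNorm X] [IsOrderedAddMonoid X] [NormedSpace ℝ X] [CompleteSpace X]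

/-- `F : C → X` is finitely additive. -/
def IsFinAddV (C : Set (Set Ω)) (F : Set Ω → X) : Prop :=
  F ∅ = 0 ∧ ∀ A ∈ C, ∀ B ∈ C, Disjoint A B → F (A ∪ B) = F A + F B

/-- The variation sums `‖Σ_{A∈π} |F A|‖` over finite `C`-partitions `π` of `Ω`. -/
def vSums (C : Set (Set Ω)) (F : Set Ω → X) : Set ℝ :=
  {x | ∃ π : Finset (Set Ω), IsPartition C π univ ∧ x = ‖∑ E ∈ π, |F E|‖}

/-- The `ba₀(C, X)` norm. -/
def ba0Norm (C : Set (Set Ω)) (F : Set Ω → X) : ℝ :=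
  sSup (vSums C F)

/-- `F ∈ ba₀(C, X)`. -/
def Memba0 (C : Set (Set Ω)) (F : Set Ω → X) : Prop :=
  IsFinAddV C F ∧ BddAbove (vSums C F)

/-- Property (P) for `X`: every increasing norm bounded net admits a least upper bound
to which it converges in norm. -/
def PropertyP (X : Type) [NormedAddCommGroup X] [Lattice X] [HasSolidNorm X] [IsOrderedAddMonoid X] : Prop :=
  ∀ (ι : Type) [Preorder ι] [IsDirected ι (· ≤ ·)] [Nonempty ι] (f : ι → X),
    Monotone f → (∃ M, ∀ a, ‖f a‖ ≤ M) →
      ∃ x : X, IsLUB (Set.range f) x ∧ Tendsto f atTop (nhds x)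

open scoped Pointwise FinsetFamily

section SetAlgebra

variable {Ω : Type} {C : Set (Set Ω)} {A B : Set Ω}

namespace IsSetAlg

lemma compl_mem (hC : IsSetAlg C) (hA : A ∈ C) : Aᶜ ∈ C := hC.2.1 A hA

lemma union_mem (hC : IsSetAlg C) (hA : A ∈ C) (hB : B ∈ C) : A ∪ B ∈ C := hC.2.2 A hA B hB

lemma univ_mem (hC : IsSetAlg C) : univ ∈ C := by
  simpa using hC.compl_mem hC.1

lemma inter_mem (hC : IsSetAlg C) (hA : A ∈ C) (hB : B ∈ C) : A ∩ B ∈ C := by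
  simpa using hC.compl_mem (hC.union_mem (hC.compl_mem hA) (hC.compl_mem hB))

lemma diff_mem (hC : IsSetAlg C) (hA : A ∈ C) (hB : B ∈ C) : A \ B ∈ C :=
  hC.inter_mem hA (hC.compl_mem hB)

lemma biUnion_mem (hC : IsSetAlg C) {ι : Type*} (s : Finset ι) {g : ι → Set Ω}
    (hg : ∀ i ∈ s, g i ∈ C) : ⋃ i ∈ s, g i ∈ C := by
  classical
  induction s using Finset.induction_on with
  | empty => simpa using hC.1
  | insert a s _ ih =>
    rw [Finset.set_biUnion_insert]
    exact hC.union_mem (hg a (s.mem_insert_self a))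
      (ih fun i hi => hg i (Finset.mem_insert_of_mem hi))

end IsSetAlg

lemma isPartition_singleton_univ (hC : IsSetAlg C) : IsPartition C {univ} univ :=
  ⟨by simpa using hC.univ_mem, by simp, by simp⟩

lemma isPartition_pair_compl [DecidableEq (Set Ω)] (hC : IsSetAlg C) (hA : A ∈ C) :
    IsPartition C {A, Aᶜ} univ := by
  refine ⟨?_, ?_, by simp⟩
  · simpa using ⟨hA, hC.compl_mem hA⟩
  · rw [Finset.coe_pair]
    exact Set.pairwise_pair_of_symm.2 fun _ => disjoint_compl_right

lemma pairwiseDisjoint_inter_prod {α : Type*} {s t : Set (Set α)} (hs : s.PairwiseDisjoint id)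
    (ht : t.PairwiseDisjoint id) : (s ×ˢ t).PairwiseDisjoint fun p => p.1 ∩ p.2 := by
  rintro ⟨E, E'⟩ ⟨hE, hE'⟩ ⟨H, H'⟩ ⟨hH, hH'⟩ hne
  by_cases hEH : E = H
  · subst hEH
    exact (ht hE' hH' fun h => hne (Prod.ext rfl h)).mono inter_subset_right inter_subset_right
  · exact (hs hE hH hEH).mono inter_subset_left inter_subset_left

lemma IsPartition.infs [DecidableEq (Set Ω)] (hC : IsSetAlg C) {π π' : Finset (Set Ω)}
    (hπ : IsPartition C π A) (hπ' : IsPartition C π' B) : IsPartition C (π ⊼ π') (A ∩ B) := by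
  refine ⟨?_, ?_, ?_⟩
  · intro _ hH
    obtain ⟨E, hE, E', hE', rfl⟩ := Finset.mem_infs.1 hH
    exact hC.inter_mem (hπ.1 E hE) (hπ'.1 E' hE')
  · intro _ hH _ hH' hne
    obtain ⟨E, hE, E', hE', rfl⟩ := Finset.mem_infs.1 hH
    obtain ⟨F, hF, F', hF', rfl⟩ := Finset.mem_infs.1 hH'
    exact pairwiseDisjoint_inter_prod hπ.2.1 hπ'.2.1 (mk_mem_prod hE hE') (mk_mem_prod hF hF')
      fun h => hne (by simp_all)
  · rw [← hπ.2.2, ← hπ'.2.2, Finset.coe_infs, Set.sUnion_inter_sUnion, ← Set.image_inf_prod,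
      ← Set.image_uncurry_prod, Set.sUnion_image]
    rfl

end SetAlgebra

lemma Filter.Tendsto.latticeAbs {α G : Type*} [Lattice G] [AddGroup G] [TopologicalSpace G]
    [ContinuousSup G] [ContinuousNeg G] {l : Filter α} {u : α → G} {x : G}
    (h : Tendsto u l (nhds x)) : Tendsto (fun i => |u i|) l (nhds |x|) :=
  h.sup_nhds h.neg

section Additive

variable {Ω X : Type} [NormedAddCommGroup X] {C : Set (Set Ω)} {A B : Set Ω} {F G : Set Ω → X}

namespace IsFinAddV

lemma sub (hF : IsFinAddV C F) (hG : IsFinAddV C G) : IsFinAddV C fun A => F A - G A := by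
  refine ⟨by simp [hF.1, hG.1], fun A hA B hB hAB => ?_⟩
  simp only [hF.2 A hA B hB hAB, hG.2 A hA B hB hAB]
  abel

lemma add (hF : IsFinAddV C F) (hG : IsFinAddV C G) : IsFinAddV C fun A => F A + G A := by
  refine ⟨by simp [hF.1, hG.1], fun A hA B hB hAB => ?_⟩
  simp only [hF.2 A hA B hB hAB, hG.2 A hA B hB hAB]
  abel

lemma map_biUnion (hF : IsFinAddV C F) (hC : IsSetAlg C) {ι : Type*} (s : Finset ι)
    {g : ι → Set Ω} (hg : ∀ i ∈ s, g i ∈ C) (hd : (s : Set ι).PairwiseDisjoint g) :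
    F (⋃ i ∈ s, g i) = ∑ i ∈ s, F (g i) := by
  classical
  induction s using Finset.induction_on with
  | empty => simpa using hF.1
  | insert a s ha ih =>
    have hgs : ∀ i ∈ s, g i ∈ C := fun i hi => hg i (Finset.mem_insert_of_mem hi)
    have hdisj : Disjoint (g a) (⋃ i ∈ s, g i) := by
      simp only [disjoint_iUnion_right]
      exact fun i hi => hd (by simp) (by simp [hi]) fun h => ha (h ▸ hi)
    rw [Finset.set_biUnion_insert, Finset.sum_insert ha,
      hF.2 _ (hg a (s.mem_insert_self a)) _ (hC.biUnion_mem s hgs) hdisj,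
      ih hgs (hd.subset (by simp))]

lemma sum_eq_of_isPartition (hF : IsFinAddV C F) (hC : IsSetAlg C) {π : Finset (Set Ω)}
    (hπ : IsPartition C π A) : ∑ E ∈ π, F E = F A := by
  rw [← hπ.2.2, Set.sUnion_eq_biUnion]
  exact (hF.map_biUnion hC π hπ.1 hπ.2.1).symm

lemma of_tendsto (hC : IsSetAlg C) {ι : Type*} {l : Filter ι} [l.NeBot]
    {F : ι → Set Ω → X} (hF : ∀ i, IsFinAddV C (F i))
    (hG : ∀ A ∈ C, Tendsto (fun i => F i A) l (nhds (G A))) : IsFinAddV C G := by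
  refine ⟨tendsto_nhds_unique (hG ∅ hC.1) ?_, fun A hA B hB hAB =>
    tendsto_nhds_unique (hG _ (hC.union_mem hA hB)) ?_⟩
  · simpa only [(hF _).1] using tendsto_const_nhds
  · simpa only [(hF _).2 A hA B hB hAB] using (hG A hA).add (hG B hB)

variable [Lattice X] [IsOrderedAddMonoid X]

lemma mono_of_nonneg (hF : IsFinAddV C F) (hC : IsSetAlg C) (h0 : ∀ A ∈ C, 0 ≤ F A)
    (hA : A ∈ C) (hB : B ∈ C) (hBA : B ⊆ A) : F B ≤ F A := by
  have hsplit := hF.2 B hB (A \ B) (hC.diff_mem hA hB) disjoint_sdiff_right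
  rw [Set.union_sdiff_cancel hBA] at hsplit
  rw [hsplit]
  exact le_add_of_nonneg_right (h0 _ (hC.diff_mem hA hB))

lemma sum_abs_le_sum_abs_infs [DecidableEq (Set Ω)] (hF : IsFinAddV C F) (hC : IsSetAlg C)
    {π π' : Finset (Set Ω)} (hπ : IsPartition C π univ) (hπ' : IsPartition C π' univ) :
    ∑ E ∈ π, |F E| ≤ ∑ H ∈ π ⊼ π', |F H| := by
  have hU : ⋃ E' ∈ π', E' = univ := by simpa [Set.sUnion_eq_biUnion] using hπ'.2.2
  have hsplit : ∀ E ∈ π, F E = ∑ E' ∈ π', F (E ∩ E') := fun E hE => by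
    rw [← hF.map_biUnion hC π' (fun E' hE' => hC.inter_mem (hπ.1 E hE) (hπ'.1 E' hE'))
      ((hπ'.2.1).mono_on fun _ _ => inter_subset_right), ← Set.inter_iUnion₂, hU,
      Set.inter_univ]
  calc ∑ E ∈ π, |F E| ≤ ∑ E ∈ π, ∑ E' ∈ π', |F (E ∩ E')| := by
        refine Finset.sum_le_sum fun E hE => ?_
        rw [hsplit E hE]
        exact Finset.le_sum_of_subadditive _ abs_zero.le abs_add_le _ _
    _ = ∑ p ∈ π ×ˢ π', |F (p.1 ∩ p.2)| := by rw [Finset.sum_product]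
    _ = ∑ H ∈ π ⊼ π', |F H| := by
        rw [← Finset.image_inf_product, Finset.sum_image_of_disjoint (by simp [hF.1])]
        · rfl
        · rw [Finset.coe_product]
          exact pairwiseDisjoint_inter_prod hπ.2.1 hπ'.2.1

end IsFinAddV

end Additive

section Variation

variable {Ω X : Type} [NormedAddCommGroup X] [Lattice X]
  {C : Set (Set Ω)} {A : Set Ω} {F G H : Set Ω → X} {π : Finset (Set Ω)} {b : ℝ}

lemma bddAbove_vSums_of_le (h : ∀ π, IsPartition C π univ → ‖∑ E ∈ π, |F E|‖ ≤ b) :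
    BddAbove (vSums C F) :=
  ⟨b, by rintro _ ⟨π, hπ, rfl⟩; exact h π hπ⟩

lemma le_ba0Norm (hF : BddAbove (vSums C F)) (hπ : IsPartition C π univ) :
    ‖∑ E ∈ π, |F E|‖ ≤ ba0Norm C F :=
  le_csSup hF ⟨π, hπ, rfl⟩

lemma ba0Norm_le (hC : IsSetAlg C) (h : ∀ π, IsPartition C π univ → ‖∑ E ∈ π, |F E|‖ ≤ b) :
    ba0Norm C F ≤ b :=
  csSup_le ⟨_, _, isPartition_singleton_univ hC, rfl⟩ (by rintro _ ⟨π, hπ, rfl⟩; exact h π hπ)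

variable [IsOrderedAddMonoid X]

lemma vSums_eq_of_nonneg (hC : IsSetAlg C) (hF : IsFinAddV C F) (h0 : ∀ A ∈ C, 0 ≤ F A) :
    vSums C F = {‖F univ‖} := by
  refine Set.eq_singleton_iff_unique_mem.2 ⟨⟨{univ}, isPartition_singleton_univ hC, ?_⟩, ?_⟩
  · simp [abs_of_nonneg (h0 _ hC.univ_mem)]
  · rintro _ ⟨π, hπ, rfl⟩
    rw [Finset.sum_congr rfl fun E hE => abs_of_nonneg (h0 E (hπ.1 E hE)),
      hF.sum_eq_of_isPartition hC hπ]

lemma abs_le_sum_abs_pair_compl [DecidableEq (Set Ω)] (F : Set Ω → X) (A : Set Ω) :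
    |F A| ≤ ∑ E ∈ {A, Aᶜ}, |F E| :=
  Finset.single_le_sum (f := fun E => |F E|) (fun _ _ => abs_nonneg _) (Finset.mem_insert_self _ _)

lemma Memba0.of_nonneg (hC : IsSetAlg C) (hF : IsFinAddV C F) (h0 : ∀ A ∈ C, 0 ≤ F A) :
    Memba0 C F :=
  ⟨hF, by rw [vSums_eq_of_nonneg hC hF h0]; exact bddAbove_singleton⟩

lemma ba0Norm_eq_of_nonneg (hC : IsSetAlg C) (hF : IsFinAddV C F) (h0 : ∀ A ∈ C, 0 ≤ F A) :
    ba0Norm C F = ‖F univ‖ := by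
  rw [ba0Norm, vSums_eq_of_nonneg hC hF h0, csSup_singleton]

variable [HasSolidNorm X]

lemma norm_le_norm_of_nonneg_of_le {a b : X} (ha : 0 ≤ a) (hab : a ≤ b) : ‖a‖ ≤ ‖b‖ :=
  norm_le_norm_of_abs_le_abs (by rwa [abs_of_nonneg ha, abs_of_nonneg (ha.trans hab)])

lemma norm_apply_le_ba0Norm (hC : IsSetAlg C) (hF : BddAbove (vSums C F)) (hA : A ∈ C) :
    ‖F A‖ ≤ ba0Norm C F := by
  classical
  calc ‖F A‖ = ‖|F A|‖ := (norm_abs_eq_norm _).symm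
    _ ≤ ‖∑ E ∈ {A, Aᶜ}, |F E|‖ :=
        norm_le_norm_of_nonneg_of_le (abs_nonneg _) (abs_le_sum_abs_pair_compl F A)
    _ ≤ ba0Norm C F := le_ba0Norm hF (isPartition_pair_compl hC hA)

lemma ba0Norm_nonneg (hC : IsSetAlg C) (hF : BddAbove (vSums C F)) : 0 ≤ ba0Norm C F :=
  (norm_nonneg _).trans (norm_apply_le_ba0Norm hC hF hC.1)

lemma bddAbove_vSums_of_abs_le (hF : BddAbove (vSums C F)) (hG : BddAbove (vSums C G))
    (h : ∀ A, |H A| ≤ |F A| + |G A|) : BddAbove (vSums C H) := by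
  obtain ⟨bF, hbF⟩ := hF
  obtain ⟨bG, hbG⟩ := hG
  refine bddAbove_vSums_of_le (b := bF + bG) fun π hπ => ?_
  calc ‖∑ E ∈ π, |H E|‖ ≤ ‖∑ E ∈ π, |F E| + ∑ E ∈ π, |G E|‖ := by
        refine norm_le_norm_of_nonneg_of_le (Finset.sum_nonneg fun _ _ => abs_nonneg _) ?_
        rw [← Finset.sum_add_distrib]
        exact Finset.sum_le_sum fun E _ => h E
    _ ≤ ‖∑ E ∈ π, |F E|‖ + ‖∑ E ∈ π, |G E|‖ := norm_add_le _ _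
    _ ≤ bF + bG := add_le_add (hbF ⟨π, hπ, rfl⟩) (hbG ⟨π, hπ, rfl⟩)

lemma Memba0.add (hF : Memba0 C F) (hG : Memba0 C G) : Memba0 C fun A => F A + G A :=
  ⟨hF.1.add hG.1, bddAbove_vSums_of_abs_le hF.2 hG.2 fun _ => abs_add_le _ _⟩

lemma Memba0.sub (hF : Memba0 C F) (hG : Memba0 C G) : Memba0 C fun A => F A - G A :=
  ⟨hF.1.sub hG.1, bddAbove_vSums_of_abs_le hF.2 hG.2 fun A => by
    simpa [sub_eq_add_neg] using abs_add_le (F A) (-G A)⟩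

lemma norm_sum_abs_le_of_tendsto {ι : Type*} {l : Filter ι} [l.NeBot] {F : ι → Set Ω → X}
    (hG : ∀ A ∈ C, Tendsto (fun i => F i A) l (nhds (G A)))
    (hb : ∀ᶠ i in l, ‖∑ E ∈ π, |F i E|‖ ≤ b) (hπ : IsPartition C π univ) :
    ‖∑ E ∈ π, |G E|‖ ≤ b :=
  le_of_tendsto (tendsto_finsetSum _ fun E hE => (hG E (hπ.1 E hE)).latticeAbs).norm hb

end Variation

section PropertyP

variable {X : Type} [NormedAddCommGroup X] [Lattice X] [HasSolidNorm X] [IsOrderedAddMonoid X]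

lemma PropertyP.exists_isLUB_of_directedOn (hP : PropertyP X) {S : Set X} (hne : S.Nonempty)
    (hdir : DirectedOn (· ≤ ·) S) {M : ℝ} (hM : ∀ x ∈ S, ‖x‖ ≤ M) : ∃ x, IsLUB S x := by
  have := hne.to_subtype
  have := hdir.isDirectedOrder
  obtain ⟨x, hx, -⟩ := hP S Subtype.val (fun _ _ h => h) ⟨M, fun a => hM a a.2⟩
  exact ⟨x, by rwa [Subtype.range_val] at hx⟩

/-- Apply (P) to the finite suprema of `S` above a fixed `s₀ ∈ S`: they form a directed set
squeezed between `s₀` and an upper bound of `S`, hence norm bounded. -/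
lemma PropertyP.exists_isLUB (hP : PropertyP X) {S : Set X} (hne : S.Nonempty)
    (hbdd : BddAbove S) : ∃ x, IsLUB S x := by
  obtain ⟨s₀, hs₀⟩ := hne
  obtain ⟨u, hu⟩ := hbdd
  set T := supClosure S ∩ Ici s₀
  have hTS : upperBounds T = upperBounds S := by
    refine Set.Subset.antisymm (fun v hv s hs => ?_) ?_
    · exact le_sup_left.trans (hv ⟨supClosed_supClosure (subset_supClosure hs)
        (subset_supClosure hs₀), le_sup_right⟩)
    · rw [← upperBounds_supClosure]
      exact upperBounds_mono_set inter_subset_left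
  have hTnorm : ∀ x ∈ T, ‖x‖ ≤ ‖u - s₀‖ + ‖s₀‖ := fun x hx => by
    have hxu : x ≤ u := (upperBounds_supClosure S ▸ hu) hx.1
    calc ‖x‖ = ‖(x - s₀) + s₀‖ := by rw [sub_add_cancel]
      _ ≤ ‖x - s₀‖ + ‖s₀‖ := norm_add_le _ _
      _ ≤ ‖u - s₀‖ + ‖s₀‖ := by
        gcongr
        exact norm_le_norm_of_nonneg_of_le (sub_nonneg.2 hx.2) (sub_le_sub_right hxu _)
  have hTdir : DirectedOn (· ≤ ·) T := fun x hx y hy =>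
    ⟨x ⊔ y, ⟨supClosed_supClosure hx.1 hy.1, le_sup_of_le_left hx.2⟩, le_sup_left, le_sup_right⟩
  obtain ⟨x, hx⟩ := hP.exists_isLUB_of_directedOn (S := T) ⟨s₀, subset_supClosure hs₀, le_rfl⟩
    hTdir hTnorm
  exact ⟨x, by rwa [IsLUB, hTS] at hx⟩

end PropertyP

section Lattice

variable {Ω X : Type} [NormedAddCommGroup X] [Lattice X] [IsOrderedAddMonoid X]
  {C : Set (Set Ω)} {D F G P : Set Ω → X}

lemma IsFinAddV.of_isLUB_image_powerset (hC : IsSetAlg C) (hD : IsFinAddV C D)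
    (hP : ∀ A ∈ C, IsLUB (D '' (C ∩ 𝒫 A)) (P A)) : IsFinAddV C P := by
  refine ⟨(hP ∅ hC.1).unique ?_, fun A hA B hB hAB => (hP _ (hC.union_mem hA hB)).unique ?_⟩
  · have h : C ∩ 𝒫 ∅ = {∅} := by ext; simp [hC.1]
    rw [h, Set.image_singleton, hD.1]
    exact isLUB_singleton
  · suffices D '' (C ∩ 𝒫 (A ∪ B)) = D '' (C ∩ 𝒫 A) + D '' (C ∩ 𝒫 B) from
      this ▸ (hP A hA).add (hP B hB)
    ext y
    constructor
    · rintro ⟨E, ⟨hE, hEAB⟩, rfl⟩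
      refine ⟨D (E ∩ A), ⟨E ∩ A, ⟨hC.inter_mem hE hA, inter_subset_right⟩, rfl⟩,
        D (E ∩ B), ⟨E ∩ B, ⟨hC.inter_mem hE hB, inter_subset_right⟩, rfl⟩, ?_⟩
      change D (E ∩ A) + D (E ∩ B) = D E
      rw [← hD.2 _ (hC.inter_mem hE hA) _ (hC.inter_mem hE hB)
        (hAB.mono inter_subset_right inter_subset_right), ← Set.inter_union_distrib_left,
        Set.inter_eq_left.2 hEAB]
    · rintro ⟨_, ⟨E, ⟨hE, hEA⟩, rfl⟩, _, ⟨E', ⟨hE', hE'B⟩, rfl⟩, rfl⟩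
      exact ⟨E ∪ E', ⟨hC.union_mem hE hE', Set.union_subset_union hEA hE'B⟩,
        hD.2 _ hE _ hE' (hAB.mono hEA hE'B)⟩

variable [HasSolidNorm X]

lemma Memba0.exists_sum_abs_le (hP : PropertyP X) (hC : IsSetAlg C) (hF : Memba0 C F) :
    ∃ x, ∀ π, IsPartition C π univ → ∑ E ∈ π, |F E| ≤ x := by
  classical
  obtain ⟨M, hM⟩ := hF.2
  set S : Set X := {x | ∃ π, IsPartition C π univ ∧ x = ∑ E ∈ π, |F E|}
  have hdir : DirectedOn (· ≤ ·) S := by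
    rintro _ ⟨π, hπ, rfl⟩ _ ⟨π', hπ', rfl⟩
    refine ⟨_, ⟨π ⊼ π', by simpa using hπ.infs hC hπ', rfl⟩,
      hF.1.sum_abs_le_sum_abs_infs hC hπ hπ', ?_⟩
    rw [Finset.infs_comm]
    exact hF.1.sum_abs_le_sum_abs_infs hC hπ' hπ
  obtain ⟨x, hx⟩ := hP.exists_isLUB_of_directedOn (S := S)
    ⟨_, {univ}, isPartition_singleton_univ hC, rfl⟩ hdir (M := M)
    (by rintro _ ⟨π, hπ, rfl⟩; exact hM ⟨π, hπ, rfl⟩)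
  exact ⟨x, fun π hπ => hx.1 ⟨π, hπ, rfl⟩⟩

end Lattice

section Ba0

variable {Ω X : Type} [NormedAddCommGroup X] [Lattice X] [HasSolidNorm X] [IsOrderedAddMonoid X]
  {C : Set (Set Ω)}

theorem ba0_complete [CompleteSpace X] (hC : IsSetAlg C) (F : ℕ → Set Ω → X)
    (hF : ∀ n, Memba0 C (F n))
    (hcau : ∀ ε > (0:ℝ), ∃ N, ∀ m ≥ N, ∀ n ≥ N, ba0Norm C (fun A => F m A - F n A) < ε) :
    ∃ G : Set Ω → X, Memba0 C G ∧
      Tendsto (fun n => ba0Norm C (fun A => F n A - G A)) atTop (nhds 0) := by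
  have hlim : ∀ A ∈ C, ∃ g, Tendsto (fun n => F n A) atTop (nhds g) := fun A hA =>
    cauchySeq_tendsto_of_complete <| Metric.cauchySeq_iff.2 fun ε hε => by
      obtain ⟨N, hN⟩ := hcau ε hε
      exact ⟨N, fun m hm n hn => (dist_eq_norm _ _).trans_lt
        ((norm_apply_le_ba0Norm hC ((hF m).sub (hF n)).2 hA).trans_lt (hN m hm n hn))⟩
  choose! G hG using hlim
  have hGadd : IsFinAddV C G := IsFinAddV.of_tendsto hC (fun n => (hF n).1) hG
  have hclose : ∀ ε > (0:ℝ), ∃ N, ∀ n ≥ N, ∀ π, IsPartition C π univ →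
      ‖∑ E ∈ π, |F n E - G E|‖ ≤ ε := fun ε hε => by
    obtain ⟨N, hN⟩ := hcau ε hε
    refine ⟨N, fun n hn π hπ => norm_sum_abs_le_of_tendsto (F := fun m A => F n A - F m A)
      (fun A hA => tendsto_const_nhds.sub (hG A hA)) ?_ hπ⟩
    filter_upwards [eventually_ge_atTop N] with m hm
    exact (le_ba0Norm ((hF n).sub (hF m)).2 hπ).trans (hN n hn m hm).le
  have hGmem : Memba0 C G := by
    obtain ⟨N, hN⟩ := hclose 1 one_pos
    simpa only [sub_sub_cancel] using
      (hF N).sub ⟨(hF N).1.sub hGadd, bddAbove_vSums_of_le (hN N le_rfl)⟩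
  refine ⟨G, hGmem, Metric.tendsto_atTop.2 fun ε hε => ?_⟩
  obtain ⟨N, hN⟩ := hclose (ε / 2) (half_pos hε)
  refine ⟨N, fun n hn => ?_⟩
  rw [Real.dist_0_eq_abs, abs_of_nonneg (ba0Norm_nonneg hC ((hF n).sub hGmem).2)]
  exact (ba0Norm_le hC (hN n hn)).trans_lt (half_lt_self hε)

theorem ba0_exists_sup (hP : PropertyP X) (hC : IsSetAlg C) {F G : Set Ω → X}
    (hF : Memba0 C F) (hG : Memba0 C G) :
    ∃ H : Set Ω → X, Memba0 C H ∧ (∀ A ∈ C, F A ≤ H A) ∧ (∀ A ∈ C, G A ≤ H A) ∧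
      ∀ K : Set Ω → X, Memba0 C K → (∀ A ∈ C, F A ≤ K A) → (∀ A ∈ C, G A ≤ K A) →
        ∀ A ∈ C, H A ≤ K A := by
  classical
  set D : Set Ω → X := fun A => F A - G A
  have hD : Memba0 C D := hF.sub hG
  obtain ⟨x, hx⟩ := hD.exists_sum_abs_le hP hC
  have hDx : ∀ B ∈ C, D B ≤ x := fun B hB => (le_abs_self _).trans
    ((abs_le_sum_abs_pair_compl D B).trans (hx _ (isPartition_pair_compl hC hB)))
  have hLUB : ∀ A ∈ C, ∃ p, IsLUB (D '' (C ∩ 𝒫 A)) p := fun A _ =>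
    hP.exists_isLUB ⟨D ∅, ∅, ⟨hC.1, empty_subset A⟩, rfl⟩
      ⟨x, by rintro _ ⟨B, ⟨hB, -⟩, rfl⟩; exact hDx B hB⟩
  choose! P hPD using hLUB
  have hPadd : IsFinAddV C P := hD.1.of_isLUB_image_powerset hC hPD
  have hP0 : ∀ A ∈ C, 0 ≤ P A := fun A hA =>
    hD.1.1 ▸ (hPD A hA).1 ⟨∅, ⟨hC.1, empty_subset A⟩, rfl⟩
  refine ⟨fun A => G A + P A, hG.add (Memba0.of_nonneg hC hPadd hP0), fun A hA => ?_,
    fun A hA => le_add_of_nonneg_right (hP0 A hA), fun K hK hFK hGK A hA => ?_⟩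
  · exact sub_le_iff_le_add'.1 ((hPD A hA).1 ⟨A, ⟨hA, Subset.rfl⟩, rfl⟩)
  · have hKG0 : ∀ B ∈ C, 0 ≤ K B - G B := fun B hB => sub_nonneg.2 (hGK B hB)
    refine le_sub_iff_add_le'.1 ((hPD A hA).2 ?_)
    rintro _ ⟨B, ⟨hB, hBA⟩, rfl⟩
    exact (sub_le_sub_right (hFK B hB) _).trans
      ((hK.1.sub hG.1).mono_of_nonneg hC hKG0 hA hB hBA)

theorem ba0_propertyP (hP : PropertyP X) (hC : IsSetAlg C) {ι : Type} [Preorder ι]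
    [IsDirected ι (· ≤ ·)] [Nonempty ι] (F : ι → Set Ω → X) (hF : ∀ a, Memba0 C (F a))
    (hmono : ∀ a b : ι, a ≤ b → ∀ A ∈ C, F a A ≤ F b A) {M : ℝ}
    (hM : ∀ a, ba0Norm C (F a) ≤ M) :
    ∃ G : Set Ω → X, Memba0 C G ∧ (∀ a, ∀ A ∈ C, F a A ≤ G A) ∧
      (∀ K : Set Ω → X, Memba0 C K → (∀ a, ∀ A ∈ C, F a A ≤ K A) → ∀ A ∈ C, G A ≤ K A) ∧
      Tendsto (fun a => ba0Norm C (fun A => G A - F a A)) atTop (nhds 0) := by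
  have hlim : ∀ A ∈ C, ∃ g, IsLUB (range fun a => F a A) g ∧
      Tendsto (fun a => F a A) atTop (nhds g) := fun A hA =>
    hP ι (fun a => F a A) (fun a b hab => hmono a b hab A hA)
      ⟨M, fun a => (norm_apply_le_ba0Norm hC (hF a).2 hA).trans (hM a)⟩
  choose! G hGlub hGlim using hlim
  have hGadd : IsFinAddV C G := IsFinAddV.of_tendsto hC (fun a => (hF a).1) hGlim
  have hFG : ∀ a, ∀ A ∈ C, F a A ≤ G A := fun a A hA => (hGlub A hA).1 ⟨a, rfl⟩
  have hGmem : Memba0 C G := ⟨hGadd, bddAbove_vSums_of_le fun π hπ =>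
    norm_sum_abs_le_of_tendsto hGlim
      (Eventually.of_forall fun a => (le_ba0Norm (hF a).2 hπ).trans (hM a)) hπ⟩
  refine ⟨G, hGmem, hFG, fun K _ hK A hA => (hGlub A hA).2 ?_, ?_⟩
  · rintro _ ⟨a, rfl⟩
    exact hK a A hA
  · have hnorm : ∀ a, ba0Norm C (fun A => G A - F a A) = ‖G univ - F a univ‖ := fun a =>
      ba0Norm_eq_of_nonneg hC (hGadd.sub (hF a).1) fun A hA => sub_nonneg.2 (hFG a A hA)
    simpa [hnorm, norm_sub_rev] using
      tendsto_iff_norm_sub_tendsto_zero.1 (hGlim univ hC.univ_mem)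

end Ba0

theorem ba0_banachLattice_propertyP_general {Ω : Type} {X : Type}
    [NormedAddCommGroup X] [Lattice X] [HasSolidNorm X] [IsOrderedAddMonoid X] [CompleteSpace X]
    (hP : PropertyP X) (C : Set (Set Ω)) (hC : IsSetAlg C) :
    -- norm completeness of ba₀(C, X)
    (∀ F : ℕ → Set Ω → X, (∀ n, Memba0 C (F n)) →
      (∀ ε > (0:ℝ), ∃ N, ∀ m ≥ N, ∀ n ≥ N,
        ba0Norm C (fun A => F m A - F n A) < ε) →
      ∃ G : Set Ω → X, Memba0 C G ∧
        Tendsto (fun n => ba0Norm C (fun A => F n A - G A)) atTop (nhds 0)) ∧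
    -- the lattice property: binary least upper bounds exist in the setwise order
    (∀ F G : Set Ω → X, Memba0 C F → Memba0 C G →
      ∃ H : Set Ω → X, Memba0 C H ∧ (∀ A ∈ C, F A ≤ H A) ∧ (∀ A ∈ C, G A ≤ H A) ∧
        ∀ K : Set Ω → X, Memba0 C K → (∀ A ∈ C, F A ≤ K A) → (∀ A ∈ C, G A ≤ K A) →
          ∀ A ∈ C, H A ≤ K A) ∧
    -- property (P) for ba₀(C, X)
    (∀ (ι : Type) [Preorder ι] [IsDirected ι (· ≤ ·)] [Nonempty ι]
      (F : ι → Set Ω → X), (∀ a, Memba0 C (F a)) →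
      (∀ a b : ι, a ≤ b → ∀ A ∈ C, F a A ≤ F b A) →
      (∃ M : ℝ, ∀ a, ba0Norm C (F a) ≤ M) →
      ∃ G : Set Ω → X, Memba0 C G ∧ (∀ a, ∀ A ∈ C, F a A ≤ G A) ∧
        (∀ K : Set Ω → X, Memba0 C K → (∀ a, ∀ A ∈ C, F a A ≤ K A) →
          ∀ A ∈ C, G A ≤ K A) ∧
        Tendsto (fun a => ba0Norm C (fun A => G A - F a A)) atTop (nhds 0)) :=
  ⟨ba0_complete hC, fun _ _ hF hG => ba0_exists_sup hP hC hF hG,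
    fun _ _ _ _ F hF hmono ⟨_, hM⟩ => ba0_propertyP hP hC F hF hmono hM⟩

/-- If `X` is a Banach lattice with property (P) and `C` an algebra of
subsets of `Ω`, then `ba₀(C, X)`, ordered setwise and with the norm
`‖F‖ = sup_π ‖Σ_{A∈π} |F A|‖`, is a Banach lattice with property (P): it is norm
complete, binary least upper bounds exist, and every increasing norm bounded net has a
least upper bound to which it converges in norm. -/
theorem ba0_banachLattice_propertyP {Ω : Type} {X : Type}
    [NormedAddCommGroup X] [Lattice X] [HasSolidNorm X] [IsOrderedAddMonoid X] [NormedSpace ℝ X] [CompleteSpace X]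
    (hP : PropertyP X) (C : Set (Set Ω)) (hC : IsSetAlg C) :
    -- norm completeness of ba₀(C, X)
    (∀ F : ℕ → Set Ω → X, (∀ n, Memba0 C (F n)) →
      (∀ ε > (0:ℝ), ∃ N, ∀ m ≥ N, ∀ n ≥ N,
        ba0Norm C (fun A => F m A - F n A) < ε) →
      ∃ G : Set Ω → X, Memba0 C G ∧
        Tendsto (fun n => ba0Norm C (fun A => F n A - G A)) atTop (nhds 0)) ∧
    -- the lattice property: binary least upper bounds exist in the setwise order
    (∀ F G : Set Ω → X, Memba0 C F → Memba0 C G →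
      ∃ H : Set Ω → X, Memba0 C H ∧ (∀ A ∈ C, F A ≤ H A) ∧ (∀ A ∈ C, G A ≤ H A) ∧
        ∀ K : Set Ω → X, Memba0 C K → (∀ A ∈ C, F A ≤ K A) → (∀ A ∈ C, G A ≤ K A) →
          ∀ A ∈ C, H A ≤ K A) ∧
    -- property (P) for ba₀(C, X)
    (∀ (ι : Type) [Preorder ι] [IsDirected ι (· ≤ ·)] [Nonempty ι]
      (F : ι → Set Ω → X), (∀ a, Memba0 C (F a)) →
      (∀ a b : ι, a ≤ b → ∀ A ∈ C, F a A ≤ F b A) →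
      (∃ M : ℝ, ∀ a, ba0Norm C (F a) ≤ M) →
      ∃ G : Set Ω → X, Memba0 C G ∧ (∀ a, ∀ A ∈ C, F a A ≤ G A) ∧
        (∀ K : Set Ω → X, Memba0 C K → (∀ a, ∀ A ∈ C, F a A ≤ K A) →
          ∀ A ∈ C, G A ≤ K A) ∧
        Tendsto (fun a => ba0Norm C (fun A => G A - F a A)) atTop (nhds 0)) :=
  ba0_banachLattice_propertyP_general hP C hC
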